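/- Let 1<α<2, n≥3 and σ>0, and set I = ∫_0^∞ θ^{α−αn/2−1} μ_n(θ^{−α/2}) exp(−σ θ^{−α/(2−α)}) dθ (a finite quantity). Then for every t>0 and every x ∈ ℝⁿ with x≠0, ∫_0^t (t−τ)^{α−αn/2−1} μ_n((t−τ)^{−α/2}|x|) exp(−σ((t−τ)^{−α/2}|x|)^{2/(2−α)}) dτ ≤ I · |x|^{−n+2}; in particular the left-hand side is bounded by a constant multiple of |x|^{−n+2} uniformly in t. -/

import Mathlib

/-!
Substituting `θ = s ‖x‖^(-2/α)` shows that the integrand, integrated over all time lags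
`s = t - τ > 0`, has total mass exactly `‖x‖^(2-n) I`; since it is nonnegative, its integral over
`(0, t)` is smaller. `I` is finite because after `θ = 1/x` its integrand becomes
`x^a exp(-σ x^(α/(2-α)))` with `a > -1`, times `|log x|` when `n = 4`, and `|log x|` is dominated
by `x^ε + x^(-ε)`.
-/

open MeasureTheory Filter Set

/-- `μ_n(z)` for `z > 0`: `1` if `n = 3`, `1 + |log z|` if `n = 4`, `z^{-n+4}` if `n ≥ 5`. -/
noncomputable def mun (n : ℕ) (z : ℝ) : ℝ :=
  if n = 3 then 1 else if n = 4 then 1 + |Real.log z| else z ^ ((4 : ℝ) - n)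

open Real

lemma abs_log_le_rpow_add_rpow_neg_div {x ε : ℝ} (hx : 0 < x) (hε : 0 < ε) :
    |log x| ≤ (x ^ ε + x ^ (-ε)) / ε := by
  have hpos : log x ≤ x ^ ε / ε := log_le_rpow_div hx.le hε
  have hneg : -log x ≤ x ^ (-ε) / ε := by
    simpa [log_inv, inv_rpow hx.le, ← rpow_neg hx.le] using log_le_rpow_div (inv_pos.2 hx).le hε
  have : 0 ≤ x ^ ε / ε := by positivity
  have : 0 ≤ x ^ (-ε) / ε := by positivity
  rw [add_div]
  exact abs_le.2 ⟨by linarith, by linarith⟩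

lemma integrableOn_rpow_mul_abs_log_mul_exp_neg_mul_rpow {p s b : ℝ} (hs : -1 < s) (hp : 0 < p)
    (hb : 0 < b) :
    IntegrableOn (fun x : ℝ => x ^ s * |log x| * exp (-b * x ^ p)) (Ioi 0) := by
  set ε := (s + 1) / 2 with hε_def
  have hε : 0 < ε := by linarith
  have hup := integrableOn_rpow_mul_exp_neg_mul_rpow (s := s + ε) (by linarith) hp hb
  have hdown := integrableOn_rpow_mul_exp_neg_mul_rpow (s := s - ε) (by linarith) hp hb
  refine ((hup.add hdown).div_const ε).mono' (by fun_prop) ?_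
  filter_upwards [ae_restrict_mem measurableSet_Ioi] with x (hx : 0 < x)
  rw [norm_of_nonneg (by positivity)]
  calc x ^ s * |log x| * exp (-b * x ^ p)
      ≤ x ^ s * ((x ^ ε + x ^ (-ε)) / ε) * exp (-b * x ^ p) := by
        gcongr; exact abs_log_le_rpow_add_rpow_neg_div hx hε
    _ = (x ^ (s + ε) * exp (-b * x ^ p) + x ^ (s - ε) * exp (-b * x ^ p)) / ε := by
        rw [rpow_add hx, rpow_sub hx, rpow_neg hx.le]; ring

lemma intervalIntegral_le_setIntegral_Ioi {f : ℝ → ℝ} {a b : ℝ} (hf : IntegrableOn f (Ioi a))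
    (hf_nonneg : ∀ x ∈ Ioi a, 0 ≤ f x) (hab : a ≤ b) :
    ∫ x in a..b, f x ≤ ∫ x in Ioi a, f x := by
  rw [intervalIntegral.integral_of_le hab]
  exact setIntegral_mono_set hf ((ae_restrict_iff' measurableSet_Ioi).2 (ae_of_all _ hf_nonneg))
    Ioc_subset_Ioi_self.eventuallyLE

lemma mun_nonneg (n : ℕ) {z : ℝ} (hz : 0 ≤ z) : 0 ≤ mun n z := by
  unfold mun
  split_ifs
  · exact zero_le_one
  · positivity
  · exact rpow_nonneg hz _

lemma integrableOn_rpow_mul_mun_rpow_mul_exp_neg_mul_rpow {α σ q : ℝ} (n : ℕ) (hα : 0 < α)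
    (hq : 0 < q) (hσ : 0 < σ) :
    IntegrableOn (fun x : ℝ => x ^ (α * n / 2 - α - 1) * mun n (x ^ (α / 2)) * exp (-σ * x ^ q))
      (Ioi 0) := by
  have hmain := integrableOn_rpow_mul_exp_neg_mul_rpow (s := α - 1) (by linarith) hq hσ
  unfold mun
  split_ifs with h3 h4
  · subst h3
    refine (integrableOn_rpow_mul_exp_neg_mul_rpow (s := α / 2 - 1) (by linarith) hq hσ).congr_fun
      (fun x _ => ?_) measurableSet_Ioi
    push_cast; ring_nf
  · subst h4
    have hlog := integrableOn_rpow_mul_abs_log_mul_exp_neg_mul_rpow (s := α - 1) (by linarith) hq hσ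
    refine (hmain.add (hlog.const_mul (α / 2))).congr_fun (fun x (hx : 0 < x) => ?_)
      measurableSet_Ioi
    rw [Pi.add_apply, log_rpow hx, abs_mul, abs_of_pos (by linarith : 0 < α / 2)]
    push_cast; ring_nf
  · refine hmain.congr_fun (fun x (hx : 0 < x) => ?_) measurableSet_Ioi
    rw [← rpow_mul hx.le, mul_assoc, ← mul_assoc (x ^ _), ← rpow_add hx]
    ring_nf

noncomputable def kernelProfile (α σ : ℝ) (n : ℕ) (θ : ℝ) : ℝ :=
  θ ^ (α - α * n / 2 - 1) * mun n (θ ^ (-α / 2)) * exp (-σ * θ ^ (-(α / (2 - α))))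

lemma rpow_sub_one_smul_kernelProfile_rpow_neg_one (α σ : ℝ) (n : ℕ) {x : ℝ} (hx : 0 < x) :
    x ^ ((-1 : ℝ) - 1) • kernelProfile α σ n (x ^ (-1 : ℝ)) =
      x ^ (α * n / 2 - α - 1) * mun n (x ^ (α / 2)) * exp (-σ * x ^ (α / (2 - α))) := by
  have hinv (y : ℝ) : (x ^ (-1 : ℝ)) ^ y = x ^ (-y) := by rw [← rpow_mul hx.le, neg_one_mul]
  rw [kernelProfile, smul_eq_mul, hinv, hinv, hinv, neg_neg, ← mul_assoc, ← mul_assoc,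
    ← rpow_add hx]
  ring_nf

lemma integrableOn_kernelProfile {α σ : ℝ} (n : ℕ) (hα : 0 < α) (hα₂ : α < 2) (hσ : 0 < σ) :
    IntegrableOn (kernelProfile α σ n) (Ioi 0) := by
  rw [← integrableOn_Ioi_comp_rpow_iff' _ (p := -1) (by norm_num)]
  exact (integrableOn_rpow_mul_mun_rpow_mul_exp_neg_mul_rpow n hα (by bound) hσ).congr_fun
    (fun x hx => (rpow_sub_one_smul_kernelProfile_rpow_neg_one α σ n hx).symm) measurableSet_Ioi

noncomputable def radialKernel (α σ : ℝ) (n : ℕ) (r s : ℝ) : ℝ :=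
  s ^ (α - α * n / 2 - 1) * mun n (s ^ (-α / 2) * r)
    * exp (-σ * (s ^ (-α / 2) * r) ^ (2 / (2 - α)))

lemma radialKernel_nonneg (α σ : ℝ) (n : ℕ) {r s : ℝ} (hr : 0 ≤ r) (hs : 0 ≤ s) :
    0 ≤ radialKernel α σ n r s := by
  have := mun_nonneg n (mul_nonneg (rpow_nonneg hs (-α / 2)) hr)
  unfold radialKernel
  positivity

lemma radialKernel_eq_mul_kernelProfile {α : ℝ} (σ : ℝ) (n : ℕ) (hα : α ≠ 0) {r s : ℝ}
    (hr : 0 < r) (hs : 0 < s) :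
    radialKernel α σ n r s =
      r ^ ((α - α * n / 2 - 1) * (2 / α)) * kernelProfile α σ n (s * r ^ (-(2 / α))) := by
  have hc : 0 < r ^ (-(2 / α)) := rpow_pos_of_pos hr _
  have hθ : 0 < s * r ^ (-(2 / α)) := mul_pos hs hc
  have hscale : (s * r ^ (-(2 / α))) ^ (-α / 2) = s ^ (-α / 2) * r := by
    rw [mul_rpow hs.le hc.le, ← rpow_mul hr.le, show -(2 / α) * (-α / 2) = 1 by field_simp,
      rpow_one]
  have hexp : (s * r ^ (-(2 / α))) ^ (-(α / (2 - α))) = (s ^ (-α / 2) * r) ^ (2 / (2 - α)) := by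
    rw [← hscale, ← rpow_mul hθ.le]
    ring_nf
  have hpow : r ^ ((α - α * n / 2 - 1) * (2 / α)) * (s * r ^ (-(2 / α))) ^ (α - α * n / 2 - 1)
      = s ^ (α - α * n / 2 - 1) := by
    rw [mul_rpow hs.le hc.le, ← rpow_mul hr.le, mul_left_comm, ← rpow_add hr]
    ring_nf
    rw [rpow_zero, mul_one]
  rw [radialKernel, kernelProfile, hscale, hexp, ← hpow]
  ring

lemma integrableOn_radialKernel {α σ : ℝ} (n : ℕ) (hα : 0 < α) (hα₂ : α < 2) (hσ : 0 < σ)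
    {r : ℝ} (hr : 0 < r) :
    IntegrableOn (radialKernel α σ n r) (Ioi 0) := by
  have hc : 0 < r ^ (-(2 / α)) := rpow_pos_of_pos hr _
  have hscaled := (integrableOn_Ioi_comp_mul_right_iff _ 0 hc).2
    (by simpa using integrableOn_kernelProfile n hα hα₂ hσ)
  exact IntegrableOn.congr_fun (hscaled.const_mul _)
    (fun s hs => (radialKernel_eq_mul_kernelProfile σ n hα.ne' hr hs).symm) measurableSet_Ioi

lemma setIntegral_Ioi_radialKernel {α : ℝ} (σ : ℝ) (n : ℕ) (hα : α ≠ 0) {r : ℝ} (hr : 0 < r) :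
    ∫ s in Ioi 0, radialKernel α σ n r s =
      r ^ ((2 : ℝ) - n) * ∫ θ in Ioi 0, kernelProfile α σ n θ := by
  have hc : 0 < r ^ (-(2 / α)) := rpow_pos_of_pos hr _
  rw [setIntegral_congr_fun measurableSet_Ioi
      (fun s hs => radialKernel_eq_mul_kernelProfile σ n hα hr hs),
    integral_const_mul, integral_comp_mul_right_Ioi _ _ hc, zero_mul, smul_eq_mul, ← mul_assoc,
    ← rpow_neg hr.le, neg_neg, ← rpow_add hr]
  congr 2
  field_simp
  ring

theorem convolution_kernel_bound_general
    (α σ : ℝ) (n : ℕ) (hα₁ : 1 < α) (hα₂ : α < 2) (hσ : 0 < σ)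
    (x : EuclideanSpace ℝ (Fin n)) (hx : x ≠ 0)
    (I : ℝ)
    (hI : I = ∫ θ in Ioi (0 : ℝ), θ ^ (α - α * n / 2 - 1) * mun n (θ ^ (-α / 2))
        * Real.exp (-σ * θ ^ (-(α / (2 - α))))) :
    ∀ t : ℝ, 0 < t →
      IntegrableOn
        (fun τ : ℝ => (t - τ) ^ (α - α * n / 2 - 1) * mun n ((t - τ) ^ (-α / 2) * ‖x‖)
          * Real.exp (-σ * ((t - τ) ^ (-α / 2) * ‖x‖) ^ (2 / (2 - α)))) (Ioc 0 t) ∧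
      (∫ τ in (0 : ℝ)..t,
          (t - τ) ^ (α - α * n / 2 - 1) * mun n ((t - τ) ^ (-α / 2) * ‖x‖)
            * Real.exp (-σ * ((t - τ) ^ (-α / 2) * ‖x‖) ^ (2 / (2 - α))))
        ≤ I * ‖x‖ ^ ((2 : ℝ) - n) := by
  intro t ht
  have hα : 0 < α := by linarith
  have hr : 0 < ‖x‖ := norm_pos_iff.2 hx
  have hk := integrableOn_radialKernel n hα hα₂ hσ hr
  have hk_interval : IntervalIntegrable (radialKernel α σ n ‖x‖) volume 0 t :=
    (intervalIntegrable_iff_integrableOn_Ioc_of_le ht.le).2 (hk.mono_set Ioc_subset_Ioi_self)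
  constructor
  · have := (hk_interval.comp_sub_left t).symm
    rwa [sub_self, sub_zero, intervalIntegrable_iff_integrableOn_Ioc_of_le ht.le] at this
  · calc ∫ τ in (0 : ℝ)..t, radialKernel α σ n ‖x‖ (t - τ)
        = ∫ s in (0 : ℝ)..t, radialKernel α σ n ‖x‖ s := by
          rw [intervalIntegral.integral_comp_sub_left, sub_self, sub_zero]
      _ ≤ ∫ s in Ioi 0, radialKernel α σ n ‖x‖ s :=
          intervalIntegral_le_setIntegral_Ioi hk
            (fun s hs => radialKernel_nonneg α σ n hr.le (le_of_lt hs)) ht.le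
      _ = I * ‖x‖ ^ ((2 : ℝ) - n) := by
          rw [setIntegral_Ioi_radialKernel σ n hα.ne' hr, hI, mul_comm]
          rfl

/-- The kernel bound `|k(t,x)| ≤ I·|x|^{-n+2}` uniformly in `t`, obtained by substitution
`θ = (t-τ)|x|^{-2/α}` from the finite profile integral `I`. -/
theorem convolution_kernel_bound
    (α σ : ℝ) (n : ℕ) (hα₁ : 1 < α) (hα₂ : α < 2) (hn : 3 ≤ n) (hσ : 0 < σ)
    (x : EuclideanSpace ℝ (Fin n)) (hx : x ≠ 0)
    (I : ℝ)
    (hI : I = ∫ θ in Ioi (0 : ℝ), θ ^ (α - α * n / 2 - 1) * mun n (θ ^ (-α / 2))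
        * Real.exp (-σ * θ ^ (-(α / (2 - α))))) :
    ∀ t : ℝ, 0 < t →
      IntegrableOn
        (fun τ : ℝ => (t - τ) ^ (α - α * n / 2 - 1) * mun n ((t - τ) ^ (-α / 2) * ‖x‖)
          * Real.exp (-σ * ((t - τ) ^ (-α / 2) * ‖x‖) ^ (2 / (2 - α)))) (Ioc 0 t) ∧
      (∫ τ in (0 : ℝ)..t,
          (t - τ) ^ (α - α * n / 2 - 1) * mun n ((t - τ) ^ (-α / 2) * ‖x‖)
            * Real.exp (-σ * ((t - τ) ^ (-α / 2) * ‖x‖) ^ (2 / (2 - α))))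
        ≤ I * ‖x‖ ^ ((2 : ℝ) - n) :=
  convolution_kernel_bound_general α σ n hα₁ hα₂ hσ x hx I hI
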